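/- With the zero-subspace transformation and (A,B,C) of relative degree ρ, there exists ε ∈ {1, −1} such that, as polynomials in X over 𝕜, the unique entry of the 1×1 matrix C * adjugate(X·I_n − A) * B (all matrices taken with entries in the polynomial ring 𝕜[X], with A, B, C embedded via the constant-coefficient map) equals ε · (C * A^(ρ−1) * B) · charpoly(A_η). In particular, the multiset of roots (with multiplicity) of the numerator polynomial C·adjugate(XI−A)·B equals the multiset of eigenvalues of A_η counted with algebraic multiplicity. -/

import Mathlib

/-!
Conjugating by `T` puts the system in normal form: `T B = b e_last` with `b = C A^(ρ-1) B`,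
`C T⁻¹ = e_first` for the chain coordinates, the chain rows of `T A T⁻¹` are shifts
(`ξᵢ' = ξᵢ₊₁`), and its upper-left block is `A_η`. The numerator `C adj(X I - A) B` is
invariant under conjugation, so it equals `b` times one cofactor of `X I - T A T⁻¹`.
Replacing the last chain row by the first chain unit vector makes that matrix block upper
triangular, with blocks `X I - A_η` and a chain block of determinant `1`; hence the numerator is
`b · charpoly A_η`, i.e. `ε = 1`.
-/

open Matrix Polynomial Sum

namespace Matrix

variable {R : Type*} [CommRing R] {n : Type*} [Fintype n] [DecidableEq n]

theorem adjugate_eq_det_smul_of_mul_eq_one {M N : Matrix n n R} (h : M * N = 1) :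
    M.adjugate = M.det • N := by
  rw [← mul_one M.adjugate, ← h, ← mul_assoc, adjugate_mul, smul_mul, one_mul]

theorem adjugate_charmatrix_conj {T S : Matrix n n R} (hST : S * T = 1) (A : Matrix n n R) :
    (charmatrix (T * A * S)).adjugate =
      T.map Polynomial.C * (charmatrix A).adjugate * S.map Polynomial.C := by
  set φ := (Polynomial.C : R →+* R[X]).mapMatrix (m := n)
  have hφST : φ S * φ T = 1 := by rw [← map_mul, hST, map_one]
  have hφTS : φ T * φ S = 1 := mul_eq_one_comm.mp hφST
  have hconj : charmatrix (T * A * S) = φ T * charmatrix A * φ S := by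
    rw [charmatrix, charmatrix, map_mul, map_mul, mul_sub, sub_mul,
      ← (scalar_commute _ (Commute.all _) _).eq, mul_assoc (scalar n X), hφTS, mul_one]
  have hdet : (φ T).det * (φ S).det = 1 := by rw [← det_mul, hφTS, det_one]
  rw [hconj, adjugate_mul_distrib, adjugate_mul_distrib, adjugate_eq_det_smul_of_mul_eq_one hφST,
    adjugate_eq_det_smul_of_mul_eq_one hφTS]
  simp only [Matrix.mul_smul, smul_mul, smul_smul, hdet, one_smul, ← mul_assoc]
  rfl

theorem det_eq_neg_one_pow_mul_det_submatrix_of_last_row {k : ℕ}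
    (N : Matrix (Fin (k + 1)) (Fin (k + 1)) R) (h : N (Fin.last k) = Pi.single 0 1) :
    N.det = (-1) ^ k * (N.submatrix Fin.castSucc Fin.succ).det := by
  rw [det_succ_row N (Fin.last k), Fin.sum_univ_succ, Finset.sum_eq_zero]
  · simp [h]
  · intro j _
    simp [h, Fin.succ_ne_zero]

variable {m : Type*} [Fintype m] [DecidableEq m] {k : ℕ}

theorem adjugate_charmatrix_inr_zero_inr_last
    (M : Matrix (m ⊕ Fin (k + 1)) (m ⊕ Fin (k + 1)) R)
    (hM : ∀ i : Fin k, M (inr i.castSucc) = Pi.single (inr i.succ) 1) :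
    (charmatrix M).adjugate (inr 0) (inr (Fin.last k)) = M.toBlocks₁₁.charpoly := by
  rw [adjugate_apply]
  set N := (charmatrix M).updateRow (inr (Fin.last k)) (Pi.single (inr 0) 1) with hNdef
  have hN : ∀ (i : Fin k) x, N (inr i.castSucc) x =
      (diagonal fun _ => X) (inr i.castSucc) x - Polynomial.C (Pi.single (inr i.succ) 1 x) := by
    intro i x
    rw [hNdef, updateRow_ne (by simp), charmatrix_apply, hM]
  have h₁₁ : N.toBlocks₁₁ = charmatrix M.toBlocks₁₁ := by
    ext i j
    simp [N, toBlocks₁₁, charmatrix_apply, diagonal_apply]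
  have h₂₁ : N.toBlocks₂₁ = 0 := by
    ext i j
    cases i using Fin.lastCases with
    | last => simp [N, toBlocks₂₁]
    | cast i => simp [toBlocks₂₁, hN]
  have h₂₂ : N.toBlocks₂₂.det = 1 := by
    have hlast : N.toBlocks₂₂ (Fin.last k) = Pi.single 0 1 := by
      ext j
      simp [N, toBlocks₂₂, Pi.single_apply]
    rw [det_eq_neg_one_pow_mul_det_submatrix_of_last_row _ hlast, det_of_isLowerTriangular]
    · simp [toBlocks₂₂, hN, Fin.castSucc_lt_succ.ne, ← mul_pow]
    · intro i j hij
      rw [OrderDual.toDual_lt_toDual] at hij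
      have hlt : i.castSucc < j.succ :=
        (Fin.castSucc_lt_castSucc_iff.mpr hij).trans Fin.castSucc_lt_succ
      simp [toBlocks₂₂, hN, hlt.ne, hij.ne']
  rw [← fromBlocks_toBlocks N, h₂₁, det_fromBlocks_zero₂₁, h₁₁, h₂₂, mul_one]
  rfl

end Matrix

section TransferFunction

variable {R : Type*} [CommRing R] {n : Type*} [Fintype n] [DecidableEq n]

/-- The numerator of the transfer function `C (X I - A)⁻¹ B`; its denominator is `charpoly A`. -/
noncomputable def transferNumerator (A : Matrix n n R) (B : Matrix n (Fin 1) R)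
    (C : Matrix (Fin 1) n R) : R[X] :=
  (C.map Polynomial.C * (charmatrix A).adjugate * B.map Polynomial.C) 0 0

theorem transferNumerator_conj {T S : Matrix n n R} (hST : S * T = 1) (A : Matrix n n R)
    (B : Matrix n (Fin 1) R) (C : Matrix (Fin 1) n R) :
    transferNumerator (T * A * S) (T * B) (C * S) = transferNumerator A B C := by
  have hφ : S.map Polynomial.C * T.map Polynomial.C = (1 : Matrix n n R[X]) := by
    rw [← Matrix.map_mul, hST, Matrix.map_one _ Polynomial.C_0 Polynomial.C_1]
  have key : (C * S).map Polynomial.C * (charmatrix (T * A * S)).adjugate *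
      (T * B).map Polynomial.C =
        C.map Polynomial.C * (charmatrix A).adjugate * B.map Polynomial.C := by
    rw [adjugate_charmatrix_conj hST, Matrix.map_mul, Matrix.map_mul]
    simp only [← Matrix.mul_assoc]
    rw [Matrix.mul_assoc _ (S.map _), hφ, Matrix.mul_one, Matrix.mul_assoc _ (S.map _), hφ,
      Matrix.mul_one]
  exact congrFun (congrFun key 0) 0

theorem transferNumerator_single (A : Matrix n n R) (i j : n) (b : R) :
    transferNumerator A (single j 0 b) (single 0 i 1) =
      Polynomial.C b * (charmatrix A).adjugate i j := by
  simp [transferNumerator, map_single, mul_comm]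

variable {m : Type*} [Fintype m] [DecidableEq m] {k : ℕ}

theorem transferNumerator_eq_C_mul_charpoly (e : m ⊕ Fin (k + 1) ≃ n) (A : Matrix n n R)
    (B : Matrix n (Fin 1) R) (C : Matrix (Fin 1) n R) {T S : Matrix n n R} (hST : S * T = 1)
    (hT : ∀ (i : Fin (k + 1)) (j : n), T (e (inr i)) j = (C * A ^ (i : ℕ)) 0 j)
    (hTB : ∀ j : m, (T * B) (e (inl j)) 0 = 0) (hrd : ∀ i < k, C * A ^ i * B = 0) :
    transferNumerator A B C =
      Polynomial.C ((C * A ^ k * B) 0 0) * ((T * A * S).submatrix e e).toBlocks₁₁.charpoly := by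
  have hTS : T * S = 1 := mul_eq_one_comm.mp hST
  have hrow : ∀ i : Fin (k + 1),
      (single 0 (e (inr i)) 1 : Matrix (Fin 1) n R) * T = C * A ^ (i : ℕ) := by
    intro i
    ext a j
    rw [Subsingleton.elim a 0, single_mul_apply_same, one_mul, hT]
  have hC : C * S = single 0 (e (inr 0)) 1 := by
    have h₀ := hrow 0
    rw [Fin.val_zero, pow_zero, Matrix.mul_one] at h₀
    rw [← h₀, Matrix.mul_assoc, hTS, Matrix.mul_one]
  have hB : T * B = single (e (inr (Fin.last k))) 0 ((C * A ^ k * B) 0 0) := by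
    ext r c
    rw [Subsingleton.elim c 0]
    obtain ⟨x | i, rfl⟩ := e.surjective r
    · simp [hTB]
    · have : (T * B) (e (inr i)) 0 = (C * A ^ (i : ℕ) * B) 0 0 := by
        rw [← hrow, Matrix.mul_assoc, single_mul_apply_same, one_mul]
      rw [this]
      cases i using Fin.lastCases with
      | last => simp
      | cast i => simp [hrd i i.isLt, (Fin.castSucc_lt_last i).ne']
  have hchain : ∀ i : Fin k,
      (T * A * S).submatrix e e (inr i.castSucc) = Pi.single (inr i.succ) 1 := by
    intro i
    ext x
    have : (T * A * S) (e (inr i.castSucc)) (e x) = (T * S) (e (inr i.succ)) (e x) :=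
      calc (T * A * S) (e (inr i.castSucc)) (e x)
          = ((single 0 (e (inr i.castSucc)) 1 : Matrix (Fin 1) n R) * (T * A * S)) 0 (e x) := by
            rw [single_mul_apply_same, one_mul]
        _ = (C * A ^ ((i : ℕ) + 1) * S) 0 (e x) := by
            rw [← Matrix.mul_assoc, ← Matrix.mul_assoc, hrow, Fin.val_castSucc,
              Matrix.mul_assoc C, ← pow_succ]
        _ = ((single 0 (e (inr i.succ)) 1 : Matrix (Fin 1) n R) * (T * S)) 0 (e x) := by
            rw [← Matrix.mul_assoc, hrow, Fin.val_succ]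
        _ = (T * S) (e (inr i.succ)) (e x) := by
            rw [single_mul_apply_same, one_mul]
    rw [submatrix_apply, this, hTS]
    simp [one_apply, Pi.single_apply, eq_comm]
  have hcharmatrix :
      charmatrix ((T * A * S).submatrix e e) = (charmatrix (T * A * S)).submatrix e e :=
    charmatrix_reindex (T * A * S) e.symm
  rw [← transferNumerator_conj hST, hC, hB, transferNumerator_single,
    ← adjugate_charmatrix_inr_zero_inr_last _ hchain, hcharmatrix, adjugate_submatrix_equiv_self,
    submatrix_apply]

end TransferFunction

/-- There exists `ε ∈ {1, -1}` such that, as polynomials in `X`,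
the entry of `C * adj(X I - A) * B` equals `ε * (C * A^(ρ-1) * B) * charpoly(A_η)`;
in particular the multiset of roots of the numerator polynomial equals the multiset of
eigenvalues of `A_η` with algebraic multiplicity. -/
theorem stmt11 {𝕜 : Type*} [Field 𝕜] {n ρ : ℕ} (hρ : 1 ≤ ρ) (hρn : ρ ≤ n)
    (A : Matrix (Fin n) (Fin n) 𝕜) (B : Matrix (Fin n) (Fin 1) 𝕜)
    (C : Matrix (Fin 1) (Fin n) 𝕜)
    (hrd : ∀ i : ℕ, i + 2 ≤ ρ → C * A ^ i * B = 0)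
    (hrd' : C * A ^ (ρ - 1) * B ≠ 0)
    (Cbar : Matrix (Fin ρ) (Fin n) 𝕜)
    (hCbar : ∀ (i : Fin ρ) (j : Fin n), Cbar i j = (C * A ^ (i : ℕ)) 0 j)
    (Bz : Matrix (Fin (n - ρ)) (Fin n) 𝕜) (hBz : Bz * B = 0)
    (T : Matrix (Fin n) (Fin n) 𝕜)
    (hT : ∀ (i : Fin n) (j : Fin n),
      T i j = if h : (i : ℕ) < n - ρ then Bz ⟨i, h⟩ j
              else Cbar ⟨(i : ℕ) - (n - ρ), by omega⟩ j)
    (hTinv : IsUnit T.det)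
    (Seta : Matrix (Fin n) (Fin (n - ρ)) 𝕜)
    (hSeta : ∀ (i : Fin n) (k : Fin (n - ρ)), Seta i k = T⁻¹ i ⟨(k : ℕ), by omega⟩)
    (Aeta : Matrix (Fin (n - ρ)) (Fin (n - ρ)) 𝕜)
    (hAeta : Aeta = Bz * A * Seta)
    :
    ∃ ε : 𝕜, (ε = 1 ∨ ε = -1) ∧
      (C.map Polynomial.C * (Matrix.charmatrix A).adjugate * B.map Polynomial.C) 0 0 =
        Polynomial.C ε * Polynomial.C ((C * A ^ (ρ - 1) * B) 0 0) * Aeta.charpoly ∧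
      ((C.map Polynomial.C * (Matrix.charmatrix A).adjugate * B.map Polynomial.C) 0 0).roots =
        Aeta.charpoly.roots := by
  obtain ⟨k, rfl⟩ : ∃ k, ρ = k + 1 := ⟨ρ - 1, by omega⟩
  rw [Nat.add_sub_cancel] at hrd' ⊢
  let e : Fin (n - (k + 1)) ⊕ Fin (k + 1) ≃ Fin n := finSumFinEquiv.trans (finCongr (by omega))
  have hT_inl : ∀ i j, T (e (inl i)) j = Bz i j := by
    intro i j
    rw [hT, dif_pos (by simp [e])]
    rfl
  have hT_inr : ∀ i j, T (e (inr i)) j = (C * A ^ (i : ℕ)) 0 j := by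
    intro i j
    rw [hT, dif_neg (by simp [e]), hCbar]
    simp [e]
  have hTB : ∀ j, (T * B) (e (inl j)) 0 = 0 := by
    intro j
    simp only [mul_apply, hT_inl]
    exact congrFun (congrFun hBz j) 0
  have hblock : ((T * A * T⁻¹).submatrix e e).toBlocks₁₁ = Aeta := by
    ext i j
    simp only [hAeta, toBlocks₁₁, of_apply, submatrix_apply, mul_apply, hT_inl, hSeta]
    rfl
  have hb : (C * A ^ k * B) 0 0 ≠ 0 := fun h => hrd' <| by
    ext i j
    fin_cases i; fin_cases j
    exact h
  have hnumerator : transferNumerator A B C = Polynomial.C ((C * A ^ k * B) 0 0) * Aeta.charpoly := by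
    rw [← hblock]
    exact transferNumerator_eq_C_mul_charpoly e A B C (nonsing_inv_mul T hTinv) hT_inr hTB
      fun i hi => hrd i (by omega)
  exact ⟨1, Or.inl rfl, by rw [← transferNumerator, hnumerator, map_one, one_mul],
    by rw [← transferNumerator, hnumerator, roots_C_mul _ hb]⟩
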